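/- Fix integers 0 ≤ k ≤ n and set m = n − k. Let P = {p_1 < ⋯ < p_m} and Q = {q_1 < ⋯ < q_m} be index sets with P → Q, and let λ and μ be the corresponding k-strict partitions (so λ → μ). Then N(P,Q) = N(λ,μ). -/

import Mathlib

/-! Multiplicities in the Pieri rule for `IG(n-k,2n)`: the multiplicity
`N(P,Q)` defined via cuts of the diagram `D(P,Q)` agrees with the multiplicity
`N(λ,μ)` defined via connected components of the set `𝔸` of boxes. -/

/-- Number of boxes in column `c` (`1`-indexed) of the partition `lam`. -/
def colCt {m : ℕ} (lam : Fin m → ℕ) (c : ℕ) : ℕ :=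
  (Finset.univ.filter fun j : Fin m => c ≤ lam j).card

/-- The box `b = (row, col)` lies in the skew diagram `mu ∖ lam`. -/
def SkewBox {m : ℕ} (lam mu : Fin m → ℕ) (b : Fin m × ℕ) : Prop :=
  lam b.1 < b.2 ∧ b.2 ≤ mu b.1

/-- The boxes `b`, `b'` (rows `0`-indexed, columns `1`-indexed) are `k`-related. -/
def KRel (k : ℕ) {m : ℕ} (b b' : Fin m × ℕ) : Prop :=
  |(b.2 : ℤ) - k - 1| + ((b.1 : ℕ) + 1) = |(b'.2 : ℤ) - k - 1| + ((b'.1 : ℕ) + 1)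

/-- The Pieri relation `P → Q` on index sets for `IG(n-k,2n)`. -/
def IdxArrow (n : ℕ) {m : ℕ} (P Q : Fin m → ℕ) : Prop :=
  (∀ j, Q j ≤ P j) ∧
  (∀ i j : Fin m, (i : ℕ) + 1 = (j : ℕ) → P i ≤ Q j) ∧
  (∀ i j : Fin m, (i : ℕ) + 1 = (j : ℕ) → P i = Q j →
    ∃ l : Fin m, Q l < 2 * n + 1 - P i ∧ 2 * n + 1 - P i < P l)

/-- The sequence `p_0 = 0, p_1, …, p_m` (as a function of `t ∈ ℕ`). -/
def pExt {m : ℕ} (P : Fin m → ℕ) (t : ℕ) : ℕ :=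
  if h : 1 ≤ t ∧ t ≤ m then P ⟨t - 1, by omega⟩ else 0

/-- The sequence `q_1, …, q_m, q_{m+1} = 2n+1` (as a function of `t ∈ ℕ`). -/
def qExt (n : ℕ) {m : ℕ} (Q : Fin m → ℕ) (t : ℕ) : ℕ :=
  if h : 1 ≤ t ∧ t ≤ m then Q ⟨t - 1, by omega⟩ else 2 * n + 1

/-- `c` is a cut through the diagram `D(P,Q)`: `p_t ≤ c < q_{t+1}` for some
`0 ≤ t ≤ m`, with the conventions `p_0 = 0` and `q_{m+1} = 2n+1`. -/
def IsCut (n : ℕ) {m : ℕ} (P Q : Fin m → ℕ) (c : ℕ) : Prop :=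
  ∃ t : ℕ, t ≤ m ∧ pExt P t ≤ c ∧ c < qExt n Q (t + 1)

/-- `I(P,Q) = {c ∈ [0,n] : c or 2n−c is a cut through D(P,Q)}`. -/
def ISet (n : ℕ) {m : ℕ} (P Q : Fin m → ℕ) : Set ℕ :=
  {c : ℕ | c ≤ n ∧ (IsCut n P Q c ∨ IsCut n P Q (2 * n - c))}

/-- `N(P,Q)`: the number of `c ∈ I(P,Q)` with `c ≥ 2` and `c−1 ∉ I(P,Q)`. -/
noncomputable def NIdx (n : ℕ) {m : ℕ} (P Q : Fin m → ℕ) : ℕ :=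
  Nat.card {c : ℕ // c ∈ ISet n P Q ∧ 2 ≤ c ∧ (c - 1) ∉ ISet n P Q}

/-- A box of `μ ∖ λ` is mentioned in condition (1) or (2) of the Pieri relation:
it is `k`-related to the bottom box of a first-`k` column of `μ` of the same
length as in `λ`, or to a removed box or the bottom box of `μ` in a column of
`μ` shorter than in `λ`. -/
def Mentioned (k : ℕ) {m : ℕ} (lam mu : Fin m → ℕ) (b : Fin m × ℕ) : Prop :=
  (∃ c : ℕ, 1 ≤ c ∧ c ≤ k ∧ colCt mu c = colCt lam c ∧
    ∃ j : Fin m, (j : ℕ) + 1 = colCt mu c ∧ KRel k b (j, c)) ∨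
  (∃ c : ℕ, 1 ≤ c ∧ colCt mu c < colCt lam c ∧
    ∃ j : Fin m,
      ((colCt mu c < (j : ℕ) + 1 ∧ (j : ℕ) + 1 ≤ colCt lam c) ∨
        (j : ℕ) + 1 = colCt mu c) ∧
      KRel k b (j, c))

/-- The set `𝔸`: boxes of `μ ∖ λ` in columns `k+1` through `k+n` not mentioned
in condition (1) or (2). -/
def ASet (n k : ℕ) {m : ℕ} (lam mu : Fin m → ℕ) : Set (Fin m × ℕ) :=
  {b | SkewBox lam mu b ∧ k + 1 ≤ b.2 ∧ b.2 ≤ k + n ∧ ¬Mentioned k lam mu b}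

/-- Two boxes are adjacent if they share at least a vertex. -/
def AdjBox {m : ℕ} (b b' : Fin m × ℕ) : Prop :=
  ((b.1 : ℤ) - (b'.1 : ℤ)).natAbs ≤ 1 ∧ ((b.2 : ℤ) - (b'.2 : ℤ)).natAbs ≤ 1

/-- Connectivity within a set `A` of boxes. -/
def ConnIn {m : ℕ} (A : Set (Fin m × ℕ)) (x y : Fin m × ℕ) : Prop :=
  Relation.ReflTransGen (fun a b => a ∈ A ∧ b ∈ A ∧ AdjBox a b) x y

/-- `N(λ,μ)`: the number of connected components of `𝔸` having no box in
column `k+1`. -/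
noncomputable def NPart (n k : ℕ) {m : ℕ} (lam mu : Fin m → ℕ) : ℕ :=
  Nat.card {S : Set (Fin m × ℕ) //
    (∃ b ∈ ASet n k lam mu,
      S = {x | x ∈ ASet n k lam mu ∧ ConnIn (ASet n k lam mu) b x}) ∧
    ∀ x ∈ S, x.2 ≠ k + 1}

/-! A vertical line at `v` meets the row segment `[q_j, p_j)` of at most one row `j`, since
`p_i ≤ q_{i+1}`; it meets one exactly when `v` is not a cut, and then the box of `μ ∖ λ` in row `j`
and column `n + k + 1 - v` is present. Comparing both sides through the counting functions
`#{i : r_i ≤ x}` shows that this box is mentioned in condition (1) or (2) exactly when `2n - v`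
is a cut. Hence, for `1 ≤ v ≤ n`, column `n + k + 1 - v` holds a box of `𝔸` iff `v ∉ I(P,Q)`, and
then exactly one, and boxes of `𝔸` in neighbouring columns touch. The components of `𝔸` are thus
the maximal runs of occupied columns, and a run avoiding column `k + 1` starts right after an
empty column `n + k + 1 - c` with `c ∈ I(P,Q)`, `c ≥ 2` and `c - 1 ∉ I(P,Q)`. -/

open Finset

section Counting

variable {m : ℕ}

def countLE (R : Fin m → ℕ) (x : ℕ) : ℕ := #{i | R i ≤ x}

lemma countLE_le_card (R : Fin m → ℕ) (x : ℕ) : countLE R x ≤ m :=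
  (card_filter_le _ _).trans (card_fin m).le

lemma countLE_mono (R : Fin m → ℕ) : Monotone (countLE R) := fun _ _ hxy =>
  card_le_card fun _ hi => by simp only [mem_filter, mem_univ, true_and] at hi ⊢; omega

lemma lt_countLE_iff {R : Fin m → ℕ} (hR : Monotone R) (i : Fin m) (x : ℕ) :
    (i : ℕ) < countLE R x ↔ R i ≤ x :=
  Fin.lt_card_filter_univ_iff_apply_of_imp _ fun _ _ hji hi => (hR hji).trans hi

lemma countLE_le_add_card {R : Fin m → ℕ} (hR : Function.Injective R) {x y : ℕ}
    {S : Finset ℕ} (hS : ∀ i, x < R i → R i ≤ y → R i ∈ S) :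
    countLE R y ≤ countLE R x + #S := by
  have hsplit : ({i | R i ≤ y} : Finset (Fin m)) ⊆
      univ.filter (R · ≤ x) ∪ univ.filter fun i => x < R i ∧ R i ≤ y :=
    fun i hi => by simp only [mem_union, mem_filter, mem_univ, true_and] at hi ⊢; omega
  have hmid : #({i | x < R i ∧ R i ≤ y} : Finset (Fin m)) ≤ #S :=
    card_le_card_of_injOn R (fun i hi => hS i (mem_filter.1 hi).2.1 (mem_filter.1 hi).2.2)
      hR.injOn
  exact (card_le_card hsplit).trans ((card_union_le _ _).trans (by unfold countLE; omega))

lemma countLE_add_le {R : Fin m → ℕ} (hR : Function.Injective R) {x y : ℕ} (hxy : x ≤ y) :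
    countLE R y + x ≤ countLE R x + y := by
  have := countLE_le_add_card hR (S := Ioc x y) fun i h₁ h₂ => mem_Ioc.2 ⟨h₁, h₂⟩
  rw [Nat.card_Ioc] at this
  omega

lemma countLE_add_lt {R : Fin m → ℕ} (hR : Function.Injective R) {x y z : ℕ} (hxz : x < z)
    (hzy : z ≤ y) (hz : ∀ i, R i ≠ z) : countLE R y + x < countLE R x + y := by
  have := countLE_le_add_card hR (S := (Ioc x y).erase z)
    fun i h₁ h₂ => mem_erase.2 ⟨hz i, mem_Ioc.2 ⟨h₁, h₂⟩⟩
  rw [card_erase_of_mem (mem_Ioc.2 ⟨hxz, hzy⟩), Nat.card_Ioc] at this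
  omega

end Counting

structure IsIndexSet (n : ℕ) {m : ℕ} (R : Fin m → ℕ) : Prop where
  strictMono : StrictMono R
  one_le : ∀ j, 1 ≤ R j
  le_two_mul : ∀ j, R j ≤ 2 * n
  add_ne : ∀ i j, R i + R j ≠ 2 * n + 1

def crossCount (n : ℕ) {m : ℕ} (R : Fin m → ℕ) (j : Fin m) : ℕ :=
  #{i | i < j ∧ 2 * n + 1 < R i + R j}

namespace IsIndexSet

variable {n m : ℕ} {R : Fin m → ℕ}

/-- An index set meets each pair `{r, 2n + 1 - r}` at most once, so `r ↦ min r (2n + 1 - r)` is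
injective on it. -/
lemma card_filter_le (hR : IsIndexSet n R) (p : Fin m → Prop) [DecidablePred p]
    {T : Finset ℕ} (hT : ∀ i, p i → min (R i) (2 * n + 1 - R i) ∈ T) : #{i | p i} ≤ #T := by
  refine card_le_card_of_injOn _ (fun i hi => hT i (by simpa using hi)) fun a _ b _ hab => ?_
  have := hR.add_ne a b
  have := hR.add_ne b a
  have := hR.le_two_mul a
  have := hR.le_two_mul b
  refine hR.strictMono.injective ?_
  simp only [min_def] at hab
  split_ifs at hab <;> omega

lemma countLE_add_card_le (hR : IsIndexSet n R) {v : ℕ} (hv : v ≤ n) :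
    countLE R v + m ≤ v + countLE R (2 * n - v) := by
  have hfold := hR.card_filter_le (fun i => R i ≤ v ∨ 2 * n - v < R i) (T := Icc 1 v)
    fun i hi => by have := hR.one_le i; have := hR.le_two_mul i; simp only [mem_Icc]; omega
  have hsplit := card_filter_add_card_filter_not (s := (univ : Finset (Fin m)))
    (p := fun i => R i ≤ 2 * n - v)
  rw [filter_or, card_union_of_disjoint (disjoint_filter.2 fun i _ h₁ h₂ => by omega)] at hfold
  simp only [not_le, card_univ, Fintype.card_fin, Nat.card_Icc] at hfold hsplit
  unfold countLE
  omega

lemma countLE_two_mul_sub_add_le (hR : IsIndexSet n R) {v : ℕ} (hv : v ≤ n) :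
    countLE R (2 * n - v) + v ≤ countLE R v + n := by
  have hfold := hR.card_filter_le (fun i => v < R i ∧ R i ≤ 2 * n - v) (T := Ioc v n)
    fun i hi => by simp only [mem_Ioc]; omega
  have := countLE_le_add_card hR.strictMono.injective (x := v) (y := 2 * n - v)
    (S := image R {i | v < R i ∧ R i ≤ 2 * n - v}) fun i h₁ h₂ =>
      mem_image.2 ⟨i, by simp [h₁, h₂], rfl⟩
  rw [card_image_of_injective _ hR.strictMono.injective] at this
  rw [Nat.card_Ioc] at hfold
  omega

lemma countLE_add_crossCount (hR : IsIndexSet n R) {j : Fin m} (hj : n < R j) :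
    countLE R (2 * n - R j) + crossCount n R j = j := by
  have hsplit : ({i | i < j} : Finset (Fin m)) =
      univ.filter (R · ≤ 2 * n - R j) ∪ univ.filter fun i => i < j ∧ 2 * n + 1 < R i + R j := by
    ext i
    have := hR.add_ne i j
    have := hR.le_two_mul j
    have := hR.strictMono.lt_iff_lt (a := i) (b := j)
    simp only [mem_filter, mem_univ, true_and, mem_union]
    constructor
    · intro hij
      have := this.2 hij
      omega
    · rintro (h | h)
      · exact this.1 (by omega)
      · exact h.1
  have hdisj : Disjoint (univ.filter (R · ≤ 2 * n - R j))
      (univ.filter fun i => i < j ∧ 2 * n + 1 < R i + R j) :=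
    disjoint_filter.2 fun i _ h₁ h₂ => by have := hR.le_two_mul j; omega
  rw [← Fin.card_Iio j, ← filter_gt_eq_Iio, hsplit, card_union_of_disjoint hdisj]
  rfl

lemma add_lt_countLE_add (hR : IsIndexSet n R) {j : Fin m} (hj : n < R j) :
    n + j < countLE R (2 * n - R j) + R j := by
  have hpair := hR.countLE_two_mul_sub_add_le (v := 2 * n - R j) (by omega)
  have hRj := (lt_countLE_iff hR.strictMono.monotone j (R j)).2 le_rfl
  have hle := hR.le_two_mul j
  have : countLE R (R j) ≤ countLE R (2 * n - (2 * n - R j)) :=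
    countLE_mono R (by omega)
  omega

lemma le_two_mul_sub_iff (hR : IsIndexSet n R) {i : Fin m} (hi : n < R i) {v : ℕ} (hv : 1 ≤ v)
    (hvn : v ≤ n) : R i ≤ 2 * n - v ↔ countLE R (2 * n - R i) + R i + v ≤ countLE R v + 2 * n := by
  have hle := hR.le_two_mul i
  constructor
  · intro h
    have := countLE_add_le hR.strictMono.injective (x := v) (y := 2 * n - R i) (by omega)
    omega
  · intro h
    by_contra! hlt
    have := countLE_add_lt hR.strictMono.injective (x := 2 * n - R i) (y := v)
      (z := 2 * n + 1 - R i) (by omega) (by omega)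
      fun i' => by have := hR.add_ne i' i; have := hR.le_two_mul i'; omega
    omega

end IsIndexSet

lemma crossCount_eq_zero_of_le {n m : ℕ} {R : Fin m → ℕ} (hR : Monotone R) {j : Fin m}
    (hj : R j ≤ n) : crossCount n R j = 0 :=
  card_eq_zero.2 <| filter_eq_empty_iff.2 fun i _ ⟨hij, h⟩ => by have := hR hij.le; omega

lemma colCt_le_card {m : ℕ} (part : Fin m → ℕ) (c : ℕ) : colCt part c ≤ m :=
  (card_filter_le _ _).trans (card_fin m).le

lemma lt_colCt_iff {m : ℕ} {part : Fin m → ℕ} (hpart : Antitone part) (j : Fin m) (c : ℕ) :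
    (j : ℕ) < colCt part c ↔ c ≤ part j :=
  Fin.lt_card_filter_univ_iff_apply_of_imp _ fun _ _ hji hi => hi.trans (hpart hji)

section KStrictPartition

variable {n k m : ℕ} {R part : Fin m → ℕ}

lemma part_add_countLE (hR : IsIndexSet n R)
    (hpart : ∀ j, part j + R j = n + k + 1 + crossCount n R j) {j : Fin m} (hj : n < R j) :
    part j + countLE R (2 * n - R j) + R j = n + k + 1 + j := by
  have := hR.countLE_add_crossCount hj
  have := hpart j
  omega

lemma part_add_of_le (hR : Monotone R) (hpart : ∀ j, part j + R j = n + k + 1 + crossCount n R j)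
    {j : Fin m} (hj : R j ≤ n) : part j + R j = n + k + 1 := by
  rw [hpart j, crossCount_eq_zero_of_le hR hj, add_zero]

lemma part_le_of_lt (hR : IsIndexSet n R)
    (hpart : ∀ j, part j + R j = n + k + 1 + crossCount n R j) {j : Fin m} (hj : n < R j) :
    part j ≤ k := by
  have := part_add_countLE hR hpart hj
  have := hR.add_lt_countLE_add hj
  omega

lemma antitone_part (hR : IsIndexSet n R)
    (hpart : ∀ j, part j + R j = n + k + 1 + crossCount n R j) : Antitone part := by
  cases m with
  | zero => exact fun i => i.elim0
  | succ m =>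
    refine Fin.antitone_iff_succ_le.2 fun i => ?_
    have hlt : R i.castSucc < R i.succ := hR.strictMono Fin.castSucc_lt_succ
    rcases le_or_gt (R i.succ) n with hb | hb
    · have := part_add_of_le hR.strictMono.monotone hpart hb
      have := part_add_of_le hR.strictMono.monotone hpart (j := i.castSucc) (by omega)
      omega
    rcases le_or_gt (R i.castSucc) n with ha | ha
    · have := part_add_of_le hR.strictMono.monotone hpart ha
      have := part_le_of_lt hR hpart hb
      omega
    · -- the value `2n + 1 - R (i + 1)` is omitted from `R`
      have hle := hR.le_two_mul i.succ
      have hτ := countLE_add_lt hR.strictMono.injective (x := 2 * n - R i.succ)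
        (y := 2 * n - R i.castSucc) (z := 2 * n + 1 - R i.succ) (by omega) (by omega)
        fun i' => by have := hR.add_ne i' i.succ; have := hR.le_two_mul i'; omega
      have hsucc := part_add_countLE hR hpart hb
      have hcast := part_add_countLE hR hpart ha
      rw [Fin.val_succ] at hsucc
      rw [Fin.val_castSucc] at hcast
      omega

lemma lt_colCt_iff_le_two_mul_sub (hR : IsIndexSet n R)
    (hpart : ∀ j, part j + R j = n + k + 1 + crossCount n R j) {i : Fin m} {c v : ℕ}
    (hck : c ≤ k) (hv : 1 ≤ v) (hvn : v ≤ n) (hc : c + n + countLE R v = k + 1 + i + v) :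
    (i : ℕ) < colCt part c ↔ R i ≤ 2 * n - v := by
  rw [lt_colCt_iff (antitone_part hR hpart)]
  rcases le_or_gt (R i) n with hi | hi
  · have := part_add_of_le hR.strictMono.monotone hpart hi
    exact ⟨fun _ => by omega, fun _ => by omega⟩
  · have := part_add_countLE hR hpart hi
    rw [hR.le_two_mul_sub_iff hi hv hvn]
    omega

end KStrictPartition

namespace IdxArrow

variable {n m : ℕ} {P Q : Fin m → ℕ}

lemma le_of_lt (h : IdxArrow n P Q) (hQ : Monotone Q) {i j : Fin m} (hij : i < j) :
    P i ≤ Q j :=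
  (h.2.1 i ⟨i + 1, by omega⟩ rfl).trans (hQ (Fin.le_def.2 hij))

lemma eq_of_mem_row (h : IdxArrow n P Q) (hQ : Monotone Q) {i i' : Fin m} {v : ℕ}
    (hi : Q i ≤ v) (hvi : v < P i) (hi' : Q i' ≤ v) (hvi' : v < P i') : i = i' := by
  rcases lt_trichotomy i i' with hlt | heq | hlt
  · have := h.le_of_lt hQ hlt; omega
  · exact heq
  · have := h.le_of_lt hQ hlt; omega

lemma row_le_row_le_succ (h : IdxArrow n P Q) (hP : StrictMono P) (hQ : Monotone Q)
    {i i' : Fin m} {u : ℕ} (hi : Q i ≤ u + 1) (hui : u + 1 < P i) (hi' : Q i' ≤ u)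
    (hui' : u < P i') : i' ≤ i ∧ (i : ℕ) ≤ i' + 1 := by
  constructor
  · by_contra! hlt
    have := h.le_of_lt hQ hlt
    omega
  · by_contra! hlt
    have hmid : P i' < P ⟨i' + 1, by omega⟩ := hP (Fin.lt_def.2 (Nat.lt_succ_self _))
    have := h.le_of_lt hQ (i := ⟨i' + 1, by omega⟩) (j := i) (Fin.lt_def.2 hlt)
    omega

lemma countLE_eq_of_mem_row (h : IdxArrow n P Q) (hP : Monotone P) (hQ : Monotone Q)
    {j : Fin m} {v : ℕ} (hj : Q j ≤ v) (hvj : v < P j) :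
    countLE P v = j ∧ countLE Q v = j + 1 := by
  constructor
  · rw [← Fin.card_Iio j, ← filter_gt_eq_Iio, countLE]
    congr 1
    ext i
    simp only [mem_filter, mem_univ, true_and]
    refine ⟨fun hi => lt_of_not_ge fun hji => ?_, fun hij => (h.le_of_lt hQ hij).trans hj⟩
    have := hP hji
    omega
  · rw [← Fin.card_Iic j, ← filter_ge_eq_Iic, countLE]
    congr 1
    ext i
    simp only [mem_filter, mem_univ, true_and]
    refine ⟨fun hi => le_of_not_gt fun hji => ?_, fun hij => (hQ hij).trans hj⟩
    have := h.le_of_lt hQ hji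
    omega

lemma countLE_lt_countLE_iff (h : IdxArrow n P Q) (hP : Monotone P) (hQ : Monotone Q)
    (w : ℕ) : countLE P w < countLE Q w ↔ ∃ i, Q i ≤ w ∧ w < P i := by
  constructor
  · intro hlt
    by_contra! hno
    refine hlt.not_ge (card_le_card fun i hi => ?_)
    simp only [mem_filter, mem_univ, true_and] at hi ⊢
    exact hno i hi
  · rintro ⟨i, hi, hwi⟩
    have := h.countLE_eq_of_mem_row hP hQ hi hwi
    omega

lemma isCut_iff (hP : Monotone P) (hQ : Monotone Q) {w : ℕ} (hw : w ≤ 2 * n) :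
    IsCut n P Q w ↔ ¬∃ i, Q i ≤ w ∧ w < P i := by
  constructor
  · rintro ⟨t, htm, hpt, hqt⟩ ⟨i, hi, hwi⟩
    rcases lt_or_ge (i : ℕ) t with hit | hti
    · rw [pExt, dif_pos (by omega)] at hpt
      have := hP (show i ≤ ⟨t - 1, by omega⟩ from Fin.le_def.2 (show (i : ℕ) ≤ t - 1 by omega))
      omega
    · rw [qExt, dif_pos (by omega)] at hqt
      have := hQ (show ⟨t + 1 - 1, by omega⟩ ≤ i from Fin.le_def.2 (show t + 1 - 1 ≤ (i : ℕ) by omega))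
      omega
  · intro hno
    push Not at hno
    refine ⟨countLE P w, countLE_le_card P w, ?_, ?_⟩
    · unfold pExt
      split_ifs with ht
      · exact (lt_countLE_iff hP _ w).1 (by simp only; omega)
      · exact Nat.zero_le w
    · unfold qExt
      split_ifs with ht
      · by_contra! hle
        have := (lt_countLE_iff hP _ w).2 (hno _ hle)
        simp only at this
        omega
      · omega

end IdxArrow

section Components

variable {m : ℕ} {A : Set (Fin m × ℕ)}

def Occupied (A : Set (Fin m × ℕ)) (c : ℕ) : Prop := ∃ b ∈ A, b.2 = c

def component (A : Set (Fin m × ℕ)) (b : Fin m × ℕ) : Set (Fin m × ℕ) :=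
  {x | x ∈ A ∧ ConnIn A b x}

lemma AdjBox.symm {b b' : Fin m × ℕ} (h : AdjBox b b') : AdjBox b' b := by
  unfold AdjBox at *
  omega

lemma ConnIn.symm {x y : Fin m × ℕ} (h : ConnIn A x y) : ConnIn A y x := by
  induction h with
  | refl => exact .refl
  | tail _ hyz ih => exact .head ⟨hyz.2.1, hyz.1, hyz.2.2.symm⟩ ih

lemma ConnIn.occupied {x y : Fin m × ℕ} (hx : x ∈ A) (h : ConnIn A x y) {c : ℕ}
    (hc : min x.2 y.2 ≤ c) (hc' : c ≤ max x.2 y.2) : Occupied A c := by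
  induction h generalizing c with
  | refl => exact ⟨x, hx, by omega⟩
  | @tail y z _ hyz ih =>
    obtain ⟨hy, hz, -, hadj⟩ := hyz
    by_cases hcy : min x.2 y.2 ≤ c ∧ c ≤ max x.2 y.2
    · exact ih hcy.1 hcy.2
    · exact ⟨z, hz, by omega⟩

lemma ConnIn.lt_iff_of_not_occupied {x y : Fin m × ℕ} (hx : x ∈ A) (h : ConnIn A x y) {c : ℕ}
    (hc : ¬Occupied A c) : c < x.2 ↔ c < y.2 := by
  constructor <;> intro hlt <;> by_contra! hle <;> exact hc (h.occupied hx (by omega) (by omega))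

lemma connIn_of_occupied (hthin : ∀ b ∈ A, ∀ b' ∈ A, b.2 = b'.2 → b = b')
    (hadj : ∀ b ∈ A, ∀ b' ∈ A, b.2 + 1 = b'.2 → AdjBox b b') {b b' : Fin m × ℕ} (hb : b ∈ A)
    (hb' : b' ∈ A) (hle : b.2 ≤ b'.2) (hocc : ∀ c, b.2 ≤ c → c ≤ b'.2 → Occupied A c) :
    ConnIn A b b' := by
  obtain ⟨d, hd⟩ := Nat.exists_eq_add_of_le hle
  induction d generalizing b' with
  | zero => exact hthin b hb b' hb' (by omega) ▸ Relation.ReflTransGen.refl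
  | succ d ih =>
    obtain ⟨b'', hb'', hcol⟩ := hocc (b.2 + d) (by omega) (by omega)
    exact (ih hb'' (by omega) (fun c h₁ h₂ => hocc c h₁ (by omega)) hcol).tail
      ⟨hb'', hb', hadj b'' hb'' b' hb' (by omega)⟩

lemma lt_of_mem_component {b x : Fin m × ℕ} {c : ℕ} (hc : ¬Occupied A c) (hb : b ∈ A)
    (hbc : b.2 = c + 1) (hx : x ∈ component A b) : c < x.2 :=
  (hx.2.lt_iff_of_not_occupied hb hc).1 (by omega)

lemma component_eq_of_connIn {b b' : Fin m × ℕ} (h : ConnIn A b b') :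
    component A b = component A b' := by
  ext x
  exact and_congr_right fun _ => ⟨fun hx => h.symm.trans hx, fun hx => h.trans hx⟩

/-- Walking left from `b` through occupied columns ends at an empty column `c ≥ a`, unless it
reaches column `a`. -/
lemma exists_gap_of_component (a : ℕ) (hthin : ∀ b ∈ A, ∀ b' ∈ A, b.2 = b'.2 → b = b')
    (hadj : ∀ b ∈ A, ∀ b' ∈ A, b.2 + 1 = b'.2 → AdjBox b b') (hcol : ∀ b ∈ A, a ≤ b.2)
    {b : Fin m × ℕ} (hb : b ∈ A) (hS : ∀ x ∈ component A b, x.2 ≠ a) :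
    ∃ c, a ≤ c ∧ ¬Occupied A c ∧ ∃ b₀ ∈ A, b₀.2 = c + 1 ∧ ConnIn A b₀ b := by
  classical
  have hex : ∃ c, ∀ c', c ≤ c' → c' ≤ b.2 → Occupied A c' :=
    ⟨b.2, fun c' h₁ h₂ => ⟨b, hb, by omega⟩⟩
  have hle : Nat.find hex ≤ b.2 := Nat.find_min' hex fun c' h₁ h₂ => ⟨b, hb, by omega⟩
  obtain ⟨b₀, hb₀, hcol₀⟩ := Nat.find_spec hex _ le_rfl hle
  have hconn : ConnIn A b₀ b :=
    connIn_of_occupied hthin hadj hb₀ hb (by omega) fun c h₁ h₂ =>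
      Nat.find_spec hex c (by omega) h₂
  have hne : b₀.2 ≠ a := hS b₀ ⟨hb₀, hconn.symm⟩
  have ha := hcol b₀ hb₀
  refine ⟨Nat.find hex - 1, by omega, fun hocc => ?_, b₀, hb₀, by omega, hconn⟩
  refine Nat.find_min hex (show Nat.find hex - 1 < Nat.find hex by omega) fun c' h₁ h₂ => ?_
  rcases eq_or_lt_of_le h₁ with rfl | h₁
  · exact hocc
  · exact Nat.find_spec hex c' (by omega) h₂

/-- The components of `A` are the maximal runs of occupied columns; sending an empty column `c`
to the component in column `c + 1` is a bijection onto those avoiding column `a`. -/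
theorem card_components_eq_card_gaps (a : ℕ)
    (hthin : ∀ b ∈ A, ∀ b' ∈ A, b.2 = b'.2 → b = b')
    (hadj : ∀ b ∈ A, ∀ b' ∈ A, b.2 + 1 = b'.2 → AdjBox b b') (hcol : ∀ b ∈ A, a ≤ b.2) :
    Nat.card {S : Set (Fin m × ℕ) // (∃ b ∈ A, S = component A b) ∧ ∀ x ∈ S, x.2 ≠ a} =
      Nat.card {c : ℕ // a ≤ c ∧ ¬Occupied A c ∧ Occupied A (c + 1)} := by
  symm
  refine Nat.card_eq_of_bijective (fun c => ⟨component A c.2.2.2.choose, ?_, ?_⟩) ⟨?_, ?_⟩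
  · exact ⟨_, c.2.2.2.choose_spec.1, rfl⟩
  · intro x hx
    have := lt_of_mem_component c.2.2.1 c.2.2.2.choose_spec.1 c.2.2.2.choose_spec.2 hx
    have := c.2.1
    omega
  · rintro ⟨c₁, _, hgap₁, hocc₁⟩ ⟨c₂, _, hgap₂, hocc₂⟩ hF
    have hS : component A hocc₁.choose = component A hocc₂.choose := congrArg Subtype.val hF
    have h₁₂ := lt_of_mem_component hgap₁ hocc₁.choose_spec.1 hocc₁.choose_spec.2
      (x := hocc₂.choose) (hS ▸ ⟨hocc₂.choose_spec.1, .refl⟩)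
    have h₂₁ := lt_of_mem_component hgap₂ hocc₂.choose_spec.1 hocc₂.choose_spec.2
      (x := hocc₁.choose) (hS ▸ ⟨hocc₁.choose_spec.1, .refl⟩)
    have := hocc₁.choose_spec.2
    have := hocc₂.choose_spec.2
    exact Subtype.ext (show c₁ = c₂ by omega)
  · rintro ⟨S, ⟨b, hb, rfl⟩, hS⟩
    obtain ⟨c, hac, hgap, b₀, hb₀, hcol₀, hconn⟩ := exists_gap_of_component a hthin hadj hcol hb hS
    have hocc : Occupied A (c + 1) := ⟨b₀, hb₀, hcol₀⟩
    refine ⟨⟨c, hac, hgap, hocc⟩, Subtype.ext ?_⟩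
    change component A hocc.choose = component A b
    rw [hthin _ hocc.choose_spec.1 b₀ hb₀ (by rw [hocc.choose_spec.2, hcol₀])]
    exact component_eq_of_connIn hconn

end Components

lemma kRel_iff {k m : ℕ} {b : Fin m × ℕ} {i : Fin m} {c : ℕ} (hb : k + 1 ≤ b.2) (hc : c ≤ k) :
    KRel k b (i, c) ↔ b.2 + b.1 + c = 2 * (k + 1) + i := by
  unfold KRel
  rw [abs_of_nonneg (by omega), abs_of_nonpos (by simp only; omega)]
  simp only
  omega

/-- As no column right of `k` shrinks, condition (2) only concerns the first `k` columns and
merges with condition (1). -/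
lemma mentioned_iff {k m : ℕ} {lam mu : Fin m → ℕ}
    (hcols : ∀ c, k + 1 ≤ c → colCt lam c ≤ colCt mu c) (b : Fin m × ℕ) :
    Mentioned k lam mu b ↔ ∃ c, ∃ i : Fin m, 1 ≤ c ∧ c ≤ k ∧ colCt mu c ≤ i + 1 ∧
      i + 1 ≤ colCt lam c ∧ KRel k b (i, c) := by
  constructor
  · rintro (⟨c, hc, hck, heq, i, hi, hrel⟩ | ⟨c, hc, hlt, i, hi, hrel⟩)
    · exact ⟨c, i, hc, hck, by omega, by omega, hrel⟩
    · have hck : c ≤ k := by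
        by_contra! hkc
        have := hcols c hkc
        omega
      exact ⟨c, i, hc, hck, by omega, by omega, hrel⟩
  · rintro ⟨c, i, hc, hck, hmu, hlam, hrel⟩
    rcases eq_or_lt_of_le (hmu.trans hlam) with heq | hlt
    · exact .inl ⟨c, hc, hck, heq, i, by omega, hrel⟩
    · exact .inr ⟨c, hc, hlt, i, by omega, hrel⟩

structure PieriSetting (n k : ℕ) {m : ℕ} (P Q lam mu : Fin m → ℕ) : Prop where
  card_add : m + k = n
  indexP : IsIndexSet n P
  indexQ : IsIndexSet n Q
  arrow : IdxArrow n P Q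
  lam_add : ∀ j, lam j + P j = n + k + 1 + crossCount n P j
  mu_add : ∀ j, mu j + Q j = n + k + 1 + crossCount n Q j

namespace PieriSetting

variable {n k m : ℕ} {P Q lam mu : Fin m → ℕ}

lemma colCt_le_colCt (S : PieriSetting n k P Q lam mu) {c : ℕ} (hc : k + 1 ≤ c) :
    colCt lam c ≤ colCt mu c :=
  card_le_card fun i hi => by
    simp only [mem_filter, mem_univ, true_and] at hi ⊢
    have hPi : P i ≤ n := by
      by_contra! hPi
      have := part_le_of_lt S.indexP S.lam_add hPi
      omega
    have := S.arrow.1 i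
    have := part_add_of_le S.indexP.strictMono.monotone S.lam_add hPi
    have := part_add_of_le S.indexQ.strictMono.monotone S.mu_add (j := i) (by omega)
    omega

lemma countLE_le_of_mentioned (S : PieriSetting n k P Q lam mu) {j : Fin m} {v : ℕ}
    (hj : Q j ≤ v) (hvj : v < P j) (hv : 1 ≤ v) (hvn : v ≤ n)
    (hment : Mentioned k lam mu (j, n + k + 1 - v)) :
    countLE Q (2 * n - v) ≤ countLE P (2 * n - v) := by
  have hP := S.indexP
  have hQ := S.indexQ
  obtain ⟨hcP, hcQ⟩ :=
    S.arrow.countLE_eq_of_mem_row hP.strictMono.monotone hQ.strictMono.monotone hj hvj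
  obtain ⟨c, i, -, hck, hcolmu, hcollam, hrel⟩ :=
    (mentioned_iff (fun c hc => S.colCt_le_colCt hc) _).1 hment
  rw [kRel_iff (by simp only; omega) hck] at hrel
  simp only at hrel
  have hPi := (lt_countLE_iff hP.strictMono.monotone i _).2
    ((lt_colCt_iff_le_two_mul_sub hP S.lam_add hck hv hvn (by omega)).1 hcollam)
  by_contra! hlt
  have hi : (i : ℕ) + 1 < m := by have := countLE_le_card Q (2 * n - v); omega
  have hQi := (lt_countLE_iff hQ.strictMono.monotone ⟨i + 1, hi⟩ (2 * n - v)).1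
    (by simp only; omega)
  have := (lt_colCt_iff_le_two_mul_sub hQ S.mu_add hck hv hvn (by simp only; omega)).2 hQi
  simp only at this
  omega

/-- The witness sits in row `countLE P (2n - v)` (counted from 1), in the column `c ≤ k` forced
by the `k`-relation. -/
lemma mentioned_of_countLE_le (S : PieriSetting n k P Q lam mu) {j : Fin m} {v : ℕ}
    (hj : Q j ≤ v) (hvj : v < P j) (hv : 1 ≤ v) (hvn : v ≤ n)
    (hcut : countLE Q (2 * n - v) ≤ countLE P (2 * n - v)) :
    Mentioned k lam mu (j, n + k + 1 - v) := by
  have hP := S.indexP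
  have hQ := S.indexQ
  have hmk := S.card_add
  obtain ⟨hcP, hcQ⟩ :=
    S.arrow.countLE_eq_of_mem_row hP.strictMono.monotone hQ.strictMono.monotone hj hvj
  have hQv : j + 1 ≤ countLE Q (2 * n - v) := hcQ ▸ countLE_mono Q (by omega)
  have hpairP := hP.countLE_two_mul_sub_add_le hvn
  have hpairQ := hQ.countLE_add_card_le hvn
  have hXm := countLE_le_card P (2 * n - v)
  set X := countLE P (2 * n - v)
  have hi : X - 1 < m := by omega
  set c := k + 1 + X + v - (n + 1 + j)
  refine (mentioned_iff (fun c hc => S.colCt_le_colCt hc) _).2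
    ⟨c, ⟨X - 1, hi⟩, by omega, by omega, ?_, ?_, ?_⟩
  · by_contra! hlt
    simp only at hlt
    have hX : X < m := by have := colCt_le_card mu c; omega
    have hQX := (lt_colCt_iff_le_two_mul_sub hQ S.mu_add (i := ⟨X, hX⟩) (c := c) (by omega) hv hvn
      (by simp only; omega)).1 (by simp only; omega)
    have := (lt_countLE_iff hQ.strictMono.monotone ⟨X, hX⟩ _).2 hQX
    simp only at this
    omega
  · exact (lt_colCt_iff_le_two_mul_sub hP S.lam_add (by omega) hv hvn (by simp only; omega)).2
      ((lt_countLE_iff hP.strictMono.monotone _ _).1 (by simp only; omega))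
  · rw [kRel_iff (by simp only; omega) (by omega)]
    simp only
    omega

lemma mentioned_iff_isCut (S : PieriSetting n k P Q lam mu) {j : Fin m} {v : ℕ}
    (hj : Q j ≤ v) (hvj : v < P j) (hv : 1 ≤ v) (hvn : v ≤ n) :
    Mentioned k lam mu (j, n + k + 1 - v) ↔ IsCut n P Q (2 * n - v) := by
  have hP := S.indexP.strictMono.monotone
  have hQ := S.indexQ.strictMono.monotone
  rw [IdxArrow.isCut_iff hP hQ (by omega), ← S.arrow.countLE_lt_countLE_iff hP hQ, not_lt]
  exact ⟨S.countLE_le_of_mentioned hj hvj hv hvn, S.mentioned_of_countLE_le hj hvj hv hvn⟩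

lemma lam_add_lt_of_mem_row (S : PieriSetting n k P Q lam mu) {j : Fin m} {v : ℕ}
    (hj : Q j ≤ v) (hvj : v < P j) (hv : 1 ≤ v) (hvn : v ≤ n) : lam j + v < n + k + 1 := by
  have hP := S.indexP
  rcases le_or_gt (P j) n with hPj | hPj
  · have := part_add_of_le hP.strictMono.monotone S.lam_add hPj
    omega
  have hτ := part_add_countLE hP S.lam_add hPj
  have hcP := (S.arrow.countLE_eq_of_mem_row hP.strictMono.monotone
    S.indexQ.strictMono.monotone hj hvj).1
  by_cases hle : P j ≤ 2 * n - v
  · have := countLE_mono P (show v ≤ 2 * n - P j by omega)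
    omega
  · rw [hP.le_two_mul_sub_iff hPj hv hvn] at hle
    omega

lemma mem_row_of_mem_ASet (S : PieriSetting n k P Q lam mu) {b : Fin m × ℕ}
    (hb : b ∈ ASet n k lam mu) : Q b.1 ≤ n + k + 1 - b.2 ∧ n + k + 1 - b.2 < P b.1 := by
  obtain ⟨⟨hlam, hmu⟩, hk, -, -⟩ := hb
  have hQ : Q b.1 ≤ n := by
    by_contra! hQ
    have := part_le_of_lt S.indexQ S.mu_add hQ
    omega
  have := part_add_of_le S.indexQ.strictMono.monotone S.mu_add hQ
  have := S.lam_add b.1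
  omega

lemma mem_ASet_iff (S : PieriSetting n k P Q lam mu) {j : Fin m} {v : ℕ} (hv : 1 ≤ v)
    (hvn : v ≤ n) :
    (j, n + k + 1 - v) ∈ ASet n k lam mu ↔ Q j ≤ v ∧ v < P j ∧ ¬IsCut n P Q (2 * n - v) := by
  constructor
  · intro hb
    have hrow := S.mem_row_of_mem_ASet hb
    simp only [show n + k + 1 - (n + k + 1 - v) = v by omega] at hrow
    exact ⟨hrow.1, hrow.2, (S.mentioned_iff_isCut hrow.1 hrow.2 hv hvn).not.1 hb.2.2.2⟩
  · rintro ⟨hj, hvj, hcut⟩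
    have := S.lam_add_lt_of_mem_row hj hvj hv hvn
    have := part_add_of_le S.indexQ.strictMono.monotone S.mu_add (j := j) (by omega)
    exact ⟨⟨by simp only; omega, by simp only; omega⟩, by simp only; omega, by simp only; omega,
      (S.mentioned_iff_isCut hj hvj hv hvn).not.2 hcut⟩

lemma eq_of_mem_ASet (S : PieriSetting n k P Q lam mu) {b b' : Fin m × ℕ}
    (hb : b ∈ ASet n k lam mu) (hb' : b' ∈ ASet n k lam mu) (hcol : b.2 = b'.2) : b = b' := by
  have hrow := S.mem_row_of_mem_ASet hb
  have hrow' := S.mem_row_of_mem_ASet hb'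
  rw [hcol] at hrow
  exact Prod.ext (S.arrow.eq_of_mem_row S.indexQ.strictMono.monotone hrow.1 hrow.2 hrow'.1
    hrow'.2) hcol

lemma adjBox_of_mem_ASet (S : PieriSetting n k P Q lam mu) {b b' : Fin m × ℕ}
    (hb : b ∈ ASet n k lam mu) (hb' : b' ∈ ASet n k lam mu) (hcol : b.2 + 1 = b'.2) :
    AdjBox b b' := by
  have hrow := S.mem_row_of_mem_ASet hb
  have hrow' := S.mem_row_of_mem_ASet hb'
  have hk := hb'.2.2.1
  rw [show n + k + 1 - b.2 = n + k + 1 - b'.2 + 1 by omega] at hrow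
  have := S.arrow.row_le_row_le_succ S.indexP.strictMono S.indexQ.strictMono.monotone
    hrow.1 hrow.2 hrow'.1 hrow'.2
  rw [Fin.le_def] at this
  unfold AdjBox
  omega

lemma occupied_ASet_iff (S : PieriSetting n k P Q lam mu) {c : ℕ} :
    Occupied (ASet n k lam mu) c ↔ k + 1 ≤ c ∧ c ≤ k + n ∧ n + k + 1 - c ∉ ISet n P Q := by
  have hP := S.indexP.strictMono.monotone
  have hQ := S.indexQ.strictMono.monotone
  simp only [ISet, Set.mem_ofPred_eq, not_and, not_or]
  constructor
  · rintro ⟨b, hb, rfl⟩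
    obtain ⟨hk, hkn, -⟩ := hb.2
    have hrow := S.mem_row_of_mem_ASet hb
    have hmem : (b.1, n + k + 1 - (n + k + 1 - b.2)) ∈ ASet n k lam mu := by
      rwa [show n + k + 1 - (n + k + 1 - b.2) = b.2 by omega]
    obtain ⟨-, -, hcut⟩ := (S.mem_ASet_iff (by omega) (by omega)).1 hmem
    refine ⟨hk, hkn, fun _ => ⟨?_, hcut⟩⟩
    rw [IdxArrow.isCut_iff hP hQ (by omega), not_not]
    exact ⟨b.1, hrow.1, hrow.2⟩
  · rintro ⟨hk, hkn, hnot⟩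
    obtain ⟨hcut, hcut'⟩ := hnot (by omega)
    rw [IdxArrow.isCut_iff hP hQ (by omega), not_not] at hcut
    obtain ⟨j, hj, hvj⟩ := hcut
    exact ⟨_, (S.mem_ASet_iff (by omega) (by omega)).2 ⟨hj, hvj, hcut'⟩, by simp only; omega⟩

lemma NIdx_eq_card_gaps (S : PieriSetting n k P Q lam mu) :
    NIdx n P Q = Nat.card {c : ℕ // k + 1 ≤ c ∧ ¬Occupied (ASet n k lam mu) c ∧
      Occupied (ASet n k lam mu) (c + 1)} := by
  have hI {c : ℕ} (hc : c ∈ ISet n P Q) : c ≤ n := hc.1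
  refine Nat.card_eq_of_bijective (fun c => ⟨n + k + 1 - c, ?_, ?_, ?_⟩) ⟨?_, ?_⟩
  · have := hI c.2.1; omega
  · rw [S.occupied_ASet_iff, show n + k + 1 - (n + k + 1 - c) = c by have := hI c.2.1; omega]
    exact fun h => h.2.2 c.2.1
  · rw [S.occupied_ASet_iff, show n + k + 1 - (n + k + 1 - c + 1) = c - 1 by
      have := hI c.2.1; omega]
    have := hI c.2.1
    exact ⟨by omega, by omega, c.2.2.2⟩
  · rintro ⟨c₁, hc₁, _⟩ ⟨c₂, hc₂, _⟩ h
    have := hI hc₁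
    have := hI hc₂
    have := congrArg Subtype.val h
    simp only at this
    exact Subtype.ext (show c₁ = c₂ by omega)
  · rintro ⟨c, hk, hgap, hocc⟩
    obtain ⟨-, hkn, hnot⟩ := S.occupied_ASet_iff.1 hocc
    rw [S.occupied_ASet_iff] at hgap
    refine ⟨⟨n + k + 1 - c, ?_, by omega, ?_⟩, Subtype.ext (show n + k + 1 - (n + k + 1 - c) = c
      by omega)⟩
    · by_contra hc
      exact hgap ⟨hk, by omega, hc⟩
    · rwa [show n + k + 1 - c - 1 = n + k + 1 - (c + 1) by omega]

end PieriSetting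

/-- **The Pieri multiplicities agree:** if `P → Q` are index sets for
`IG(n−k,2n)` with associated `k`-strict partitions `λ → μ`, then
`N(P,Q) = N(λ,μ)`. -/
theorem NIdx_eq_NPart (n m k : ℕ) (hmk : m + k = n)
    (P Q : Fin m → ℕ)
    (hPmono : StrictMono P) (hPrange : ∀ j, 1 ≤ P j ∧ P j ≤ 2 * n)
    (hPidx : ∀ i j, P i + P j ≠ 2 * n + 1)
    (hQmono : StrictMono Q) (hQrange : ∀ j, 1 ≤ Q j ∧ Q j ≤ 2 * n)
    (hQidx : ∀ i j, Q i + Q j ≠ 2 * n + 1)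
    (harrow : IdxArrow n P Q)
    (lam mu : Fin m → ℕ)
    (hlam : ∀ j : Fin m, (lam j : ℤ) = (n + k + 1 : ℤ) - P j +
      ((Finset.univ.filter fun i : Fin m => i < j ∧ 2 * n + 1 < P i + P j).card : ℤ))
    (hmu : ∀ j : Fin m, (mu j : ℤ) = (n + k + 1 : ℤ) - Q j +
      ((Finset.univ.filter fun i : Fin m => i < j ∧ 2 * n + 1 < Q i + Q j).card : ℤ)) :
    NIdx n P Q = NPart n k lam mu := by
  have S : PieriSetting n k P Q lam mu :=
    { card_add := hmk
      indexP := ⟨hPmono, fun j => (hPrange j).1, fun j => (hPrange j).2, hPidx⟩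
      indexQ := ⟨hQmono, fun j => (hQrange j).1, fun j => (hQrange j).2, hQidx⟩
      arrow := harrow
      lam_add := fun j => by have := hlam j; unfold crossCount; omega
      mu_add := fun j => by have := hmu j; unfold crossCount; omega }
  rw [S.NIdx_eq_card_gaps, NPart]
  exact (card_components_eq_card_gaps (k + 1) (fun b hb b' hb' => S.eq_of_mem_ASet hb hb')
    (fun b hb b' hb' => S.adjBox_of_mem_ASet hb hb') fun b hb => hb.2.1).symm
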